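/- Trace theorem for p > 1: let p ∈ (1,∞) and α > 0, suppose W satisfies the second structural condition, and let ν be a finite positive Borel measure on 𝕋 satisfying the (α,p)-Frostman condition with constant C_ν. Then there is a constant C = C(m,ℓ,W,p,α,C_ν) such that every F ∈ 𝔚 satisfies, for every N ≥ 1, ‖Σ_{n=1}^N m^{−α·n}·f_n‖_{L_p(ν)} ≤ C·‖F‖_{L_1}, the L_p(ν) norm being taken of the pointwise Euclidean norm of the partial sum. -/

import Mathlib

open MeasureTheory ENNReal NNReal

noncomputable section

namespace MartingaleModel

/-- The cylinder in `ℕ → Fin m` determined by a word `w` of length `n`. -/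
def cyl (m n : ℕ) (w : Fin n → Fin m) : Set (ℕ → Fin m) :=
  {x | ∀ i : Fin n, x (i : ℕ) = w i}

/-- `F` is adapted: `F n` depends only on the first `n` coordinates. -/
def AdaptedFun (m : ℕ) {E : Type*} (F : ℕ → (ℕ → Fin m) → E) : Prop :=
  ∀ n (x y : ℕ → Fin m), (∀ i < n, x i = y i) → F n x = F n y

/-- `F` is a martingale for the uniform `m`-adic filtration:
adapted, and each value is the average of the values on the children. -/
def IsMartingaleFun (m : ℕ) {E : Type*} [AddCommGroup E] [Module ℝ E]
    (F : ℕ → (ℕ → Fin m) → E) : Prop :=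
  AdaptedFun m F ∧
    ∀ n (x : ℕ → Fin m), (m : ℝ) • F n x = ∑ j : Fin m, F (n + 1) (Function.update x n j)

/-- Partial sums of the Riesz potential `I_α` applied to the martingale `F`,
`(I_α F)_N = ∑_{n=1}^N m^{-α n} f_n` where `f_n = F_n - F_{n-1}`. -/
def rieszSum (m : ℕ) {E : Type*} [AddCommGroup E] [Module ℝ E] (α : ℝ)
    (F : ℕ → (ℕ → Fin m) → E) (N : ℕ) (x : ℕ → Fin m) : E :=
  ∑ n ∈ Finset.Icc 1 N, ((m : ℝ) ^ (-(α * n)) : ℝ) • (F n x - F (n - 1) x)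

end MartingaleModel

open MartingaleModel

namespace MartingaleModel

/-- The Lorentz `L_{p,1}` quasinorm `‖g‖_{L_{p,1}} = ∫₀^∞ μ({x : ‖g(x)‖ > t})^{1/p} dt`. -/
def lorentzNorm {X : Type*} [MeasurableSpace X] (μ : Measure X) (p : ℝ)
    {E : Type*} [NormedAddCommGroup E] (g : X → E) : ℝ≥0∞ :=
  ∫⁻ t in Set.Ioi (0 : ℝ), (μ {x | t < ‖g x‖}) ^ (1 / p)

/-- The tuple in `V^ℓ` of values of the martingale difference `f_{n+1}` on the `m`
children of the atom of `ℱ_n` containing `x`. -/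
def diffTuple (m : ℕ) {E : Type*} [AddCommGroup E]
    (F : ℕ → (ℕ → Fin m) → E) (n : ℕ) (x : ℕ → Fin m) : Fin m → E :=
  fun j => F (n + 1) (Function.update x n j) - F n x

/-- Membership of a martingale in the Sobolev-type space `𝔚`:
every difference tuple lies in `W`. -/
def MemW (m l : ℕ) (W : Submodule ℝ (Fin m → EuclideanSpace ℝ (Fin l)))
    (F : ℕ → (ℕ → Fin m) → EuclideanSpace ℝ (Fin l)) : Prop :=
  ∀ (n : ℕ) (x : ℕ → Fin m), diffTuple m F n x ∈ W

/-- The second structural condition: `W` contains no nonzero vector `v ⊗ a` in which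
`v` has `m - 1` equal coordinates. -/
def SecondStructural (m l : ℕ) (W : Submodule ℝ (Fin m → EuclideanSpace ℝ (Fin l))) : Prop :=
  ∀ (v : Fin m → ℝ) (a : EuclideanSpace ℝ (Fin l)),
    (∑ j, v j = 0) → (∃ j₀ c, ∀ j, j ≠ j₀ → v j = c) →
    (fun j => v j • a) ∈ W → (fun j => v j • a) = 0

end MartingaleModel

/-!
Compactness turns the second structural condition into a uniform contraction: there is `θ < 1`
with `‖F_{n+1}(wj)‖ ≤ θ ∑_{j'} ‖F_{n+1}(wj')‖` for every child `wj` of every atom `w`. Hence the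
`ℓ^p` norm of the values of `F_{n+1}` on the children of `w` is at most `θ^{1-1/p}` times their
`ℓ^1` norm, which is `m‖F_n(w)‖` plus a nonnegative excess. Summing over `w` with Minkowski's
inequality, `Q_n = m^{-n} ‖(F_n(w))_w‖_{ℓ^p}` satisfies `Q_{n+1} ≤ θ^{1-1/p} (Q_n + Δ_n)`, where the
normalized excesses `Δ_n` telescope to `‖F_N‖_{L_1} - ‖F_0‖_{L_1}`; so `∑ Q_n ≲ ‖F‖_{L_1}`.
On the other side, the Frostman condition bounds `m^{-αn} ‖f_n‖_{L_p(ν)}` by `C_ν (Q_n + Q_{n-1})`.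
-/

namespace ENNReal

variable {ι : Type*} {s : Finset ι} {p : ℝ}

theorem rpow_sub_one_mul_self (x : ℝ≥0∞) (hp : 1 ≤ p) : x ^ (p - 1) * x = x ^ p := by
  conv_rhs => rw [← sub_add_cancel p 1, rpow_add_of_nonneg _ _ (by linarith) zero_le_one, rpow_one]

theorem sum_rpow_le_rpow_mul_sum {f : ι → ℝ≥0∞} {C : ℝ≥0∞} (hf : ∀ i ∈ s, f i ≤ C)
    (hp : 1 ≤ p) : ∑ i ∈ s, f i ^ p ≤ C ^ (p - 1) * ∑ i ∈ s, f i := by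
  rw [Finset.mul_sum]
  refine Finset.sum_le_sum fun i hi => ?_
  rw [← rpow_sub_one_mul_self _ hp]
  have := hf i hi
  gcongr

theorem sum_rpow_le_of_le_mul_sum {f : ι → ℝ≥0∞} {θ : ℝ≥0∞}
    (hf : ∀ i ∈ s, f i ≤ θ * ∑ i ∈ s, f i) (hp : 1 ≤ p) :
    ∑ i ∈ s, f i ^ p ≤ (θ ^ (1 - 1 / p) * ∑ i ∈ s, f i) ^ p := by
  have hp0 : 0 ≤ p - 1 := by linarith
  calc ∑ i ∈ s, f i ^ p ≤ (θ * ∑ i ∈ s, f i) ^ (p - 1) * ∑ i ∈ s, f i :=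
        sum_rpow_le_rpow_mul_sum hf hp
    _ = θ ^ (p - 1) * (∑ i ∈ s, f i) ^ p := by
        rw [mul_rpow_of_nonneg _ _ hp0, mul_assoc, rpow_sub_one_mul_self _ hp]
    _ = (θ ^ (1 - 1 / p) * ∑ i ∈ s, f i) ^ p := by
        rw [mul_rpow_of_nonneg _ _ (by linarith), ← rpow_mul]
        congr 2
        field_simp

theorem rpow_sum_rpow_le_sum {f : ι → ℝ≥0∞} (hp : 1 ≤ p) :
    (∑ i ∈ s, f i ^ p) ^ (1 / p) ≤ ∑ i ∈ s, f i := by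
  have := sum_rpow_le_of_le_mul_sum (s := s) (f := f) (θ := 1)
    (fun i hi => by simpa using Finset.single_le_sum (fun _ _ => zero_le) hi) hp
  rw [one_rpow, one_mul] at this
  simpa [one_div, rpow_rpow_inv (by linarith : p ≠ 0)] using
    rpow_le_rpow this (by positivity : 0 ≤ 1 / p)

theorem rpow_sum_const_mul_rpow (f : ι → ℝ≥0∞) (c : ℝ≥0∞) (hp : 0 < p) :
    (∑ i ∈ s, (c * f i) ^ p) ^ (1 / p) = c * (∑ i ∈ s, f i ^ p) ^ (1 / p) := by
  simp only [mul_rpow_of_nonneg _ _ hp.le, ← Finset.mul_sum]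
  rw [mul_rpow_of_nonneg _ _ (by positivity), one_div, rpow_rpow_inv hp.ne']

theorem sum_range_le_of_le_mul_add {Q V Δ : ℕ → ℝ≥0∞} {σ M : ℝ≥0∞} (hσ : σ < 1)
    (hQ0 : Q 0 ≤ V 0) (hVM : ∀ k, V k ≤ M) (hV : ∀ k, V (k + 1) = V k + Δ k)
    (hQ : ∀ k, Q (k + 1) ≤ σ * (Q k + Δ k)) (N : ℕ) :
    ∑ k ∈ Finset.range N, Q k ≤ (1 - σ)⁻¹ * (2 * M) := by
  have hΔ : ∀ K, ∑ k ∈ Finset.range K, Δ k ≤ M := by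
    have hVsum : ∀ K, V K = V 0 + ∑ k ∈ Finset.range K, Δ k := by
      intro K
      induction K with
      | zero => simp
      | succ K ih => rw [hV, ih, Finset.sum_range_succ, add_assoc]
    exact fun K => le_add_self.trans ((hVsum K).symm.trans_le (hVM K))
  have hB2 : (1 - σ) * ((1 - σ)⁻¹ * (2 * M)) = 2 * M := by
    rw [← mul_assoc, ENNReal.mul_inv_cancel (tsub_pos_of_lt hσ).ne' (by simp), one_mul]
  set B := (1 - σ)⁻¹ * (2 * M)
  -- `B` is the fixed point of `x ↦ 2 M + σ x`, which dominates `M + σ (x + M)`.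
  have hB : M + σ * (B + M) ≤ B :=
    calc M + σ * (B + M) = σ * B + (M + σ * M) := by ring
      _ ≤ σ * B + 2 * M := by
          gcongr
          rw [two_mul]
          gcongr
          exact mul_le_of_le_one_left' hσ.le
      _ = σ * B + (1 - σ) * B := by rw [hB2]
      _ = B := by rw [← add_mul, add_tsub_cancel_of_le hσ.le, one_mul]
  induction N with
  | zero => simp
  | succ N ih =>
    calc ∑ k ∈ Finset.range (N + 1), Q k = ∑ k ∈ Finset.range N, Q (k + 1) + Q 0 :=
          Finset.sum_range_succ' _ _
      _ ≤ ∑ k ∈ Finset.range N, σ * (Q k + Δ k) + M :=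
          add_le_add (Finset.sum_le_sum fun k _ => hQ k) (hQ0.trans (hVM 0))
      _ ≤ M + σ * (B + M) := by
          rw [← Finset.mul_sum, Finset.sum_add_distrib, add_comm]
          gcongr
          exact hΔ N
      _ ≤ B := hB

end ENNReal

namespace MartingaleModel

section Contraction

theorem SecondStructural.norm_lt_sum {m l : ℕ} (hm : 2 ≤ m)
    {W : Submodule ℝ (Fin m → EuclideanSpace ℝ (Fin l))} (hW : SecondStructural m l W)
    (hWV : ∀ b ∈ W, ∑ j, b j = 0) {a : EuclideanSpace ℝ (Fin l)} {b} (hb : b ∈ W) {j : Fin m}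
    (hj : a + b j ≠ 0) : ‖a + b j‖ < ∑ j', ‖a + b j'‖ := by
  -- Otherwise every other child vanishes, and then `b = v ⊗ a` with `v = (-1, …, m - 1, …, -1)`.
  by_contra! hle
  have hsplit := Finset.add_sum_erase Finset.univ (fun j' => ‖a + b j'‖) (Finset.mem_univ j)
  have hrest : ∀ j' ≠ j, b j' = -a := by
    intro j' hj'
    have h0 := (Finset.sum_eq_zero_iff_of_nonneg (fun _ _ => norm_nonneg _)).1
      (le_antisymm (by linarith) (Finset.sum_nonneg fun _ _ => norm_nonneg _)) j'
      (Finset.mem_erase.2 ⟨hj', Finset.mem_univ _⟩)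
    rw [norm_eq_zero] at h0
    exact eq_neg_of_add_eq_zero_right h0
  have hcard : ((Finset.univ.erase j).card : ℝ) = m - 1 := by
    rw [Finset.card_erase_of_mem (Finset.mem_univ _), Finset.card_univ, Fintype.card_fin,
      Nat.cast_sub (by omega), Nat.cast_one]
  set v : Fin m → ℝ := fun j' => if j' = j then (m : ℝ) - 1 else -1
  have hbv : b = fun j' => v j' • a := by
    funext j'
    by_cases hj' : j' = j
    · subst hj'
      have hsum := Finset.add_sum_erase Finset.univ b (Finset.mem_univ j')
      rw [hWV b hb, Finset.sum_congr rfl fun i hi => hrest i (Finset.ne_of_mem_erase hi),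
        Finset.sum_const, ← Nat.cast_smul_eq_nsmul ℝ, hcard] at hsum
      simp only [v, if_pos rfl]
      linear_combination (norm := module) hsum
    · simp [v, hj', hrest j' hj']
  have hvsum : ∑ j', v j' = 0 := by
    rw [← Finset.add_sum_erase _ _ (Finset.mem_univ j),
      Finset.sum_congr rfl fun i hi => if_neg (Finset.ne_of_mem_erase hi)]
    simp only [v, if_pos rfl, Finset.sum_const, nsmul_eq_mul, hcard]
    ring
  have hva := hW v a hvsum ⟨j, -1, fun j' hj' => if_neg hj'⟩ (hbv ▸ hb)
  have : Nontrivial (Fin m) := Fin.nontrivial_iff_two_le.2 hm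
  obtain ⟨j', hj'⟩ := exists_ne j
  have ha : a = 0 := by simpa [v, hj'] using congrFun hva j'
  exact hj (by rw [hbv, hva, ha]; simp)

variable {m : ℕ} [NeZero m] {E : Type*} [NormedAddCommGroup E] [NormedSpace ℝ E]
  [FiniteDimensional ℝ E] {W : Submodule ℝ (Fin m → E)}

theorem isCompact_setOf_sum_norm_add_eq_one (hWV : ∀ b ∈ W, ∑ j, b j = 0) :
    IsCompact {z : E × (Fin m → E) | z.2 ∈ W ∧ ∑ j, ‖z.1 + z.2 j‖ = 1} := by
  refine Metric.isCompact_of_isClosed_isBounded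
    ((W.closed_of_finiteDimensional.preimage continuous_snd).inter
      (isClosed_eq (by fun_prop) continuous_const))
    ((Metric.isBounded_closedBall (x := 0) (r := 2)).subset fun z hz => ?_)
  have hfst : ‖z.1‖ ≤ 1 := by
    have hsum : ∑ j, (z.1 + z.2 j) = (m : ℝ) • z.1 := by
      rw [Finset.sum_add_distrib, hWV _ hz.1, add_zero, Finset.sum_const, Finset.card_univ,
        Fintype.card_fin, Nat.cast_smul_eq_nsmul]
    have hm : (1 : ℝ) ≤ m := Nat.one_le_cast.2 NeZero.one_le
    have := (norm_sum_le _ _).trans_eq hz.2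
    rw [hsum, norm_smul, Real.norm_natCast] at this
    nlinarith [norm_nonneg z.1]
  have hsnd : ‖z.2‖ ≤ 2 := (pi_norm_le_iff_of_nonneg zero_le_two).2 fun j => by
    have hj := (Finset.single_le_sum (fun j _ => norm_nonneg (z.1 + z.2 j))
      (Finset.mem_univ j)).trans_eq hz.2
    have := norm_sub_le (z.1 + z.2 j) z.1
    rw [add_sub_cancel_left] at this
    linarith
  rw [Metric.mem_closedBall, dist_zero_right, Prod.norm_def]
  exact max_le (hfst.trans one_le_two) hsnd

theorem exists_norm_le_mul_sum_of_norm_lt_sum (hWV : ∀ b ∈ W, ∑ j, b j = 0)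
    (hlt : ∀ a, ∀ b ∈ W, ∀ j, a + b j ≠ 0 → ‖a + b j‖ < ∑ j', ‖a + b j'‖) :
    ∃ θ : ℝ≥0, θ < 1 ∧ ∀ a, ∀ b ∈ W, ∀ j, ‖a + b j‖ ≤ θ * ∑ j', ‖a + b j'‖ := by
  set K : Set (E × (Fin m → E)) := {z | z.2 ∈ W ∧ ∑ j, ‖z.1 + z.2 j‖ = 1}
  have hK : IsCompact K := isCompact_setOf_sum_norm_add_eq_one hWV
  -- `1 - ‖a + b j‖` is positive on the compact set `K × Fin m`, and the bound is homogeneous.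
  have hcont : Continuous fun q : (E × (Fin m → E)) × Fin m => 1 - ‖q.1.1 + q.1.2 q.2‖ :=
    continuous_prod_of_discrete_right.2 fun j => by dsimp only; fun_prop
  obtain ⟨ε, hε, hεK⟩ := (hK.prod isCompact_univ).exists_forall_le' hcont.continuousOn
    (a := 0) fun q hq => by
      rw [sub_pos]
      by_cases hq0 : q.1.1 + q.1.2 q.2 = 0
      · simp [hq0]
      · exact (hlt _ _ hq.1.1 _ hq0).trans_eq hq.1.2
  refine ⟨(1 - ε).toNNReal, Real.toNNReal_lt_one.2 (by linarith), fun a b hb j => ?_⟩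
  set s := ∑ j', ‖a + b j'‖
  have hjs : ‖a + b j‖ ≤ s := Finset.single_le_sum (fun j _ => norm_nonneg (a + b j))
    (Finset.mem_univ j)
  rcases (hjs.trans' (norm_nonneg _)).eq_or_lt with hs | hs
  · rw [← hs] at hjs ⊢
    simpa using hjs
  have hz : (s⁻¹ • a, s⁻¹ • b) ∈ K := by
    refine ⟨W.smul_mem _ hb, ?_⟩
    simp only [Pi.smul_apply, ← smul_add, norm_smul, Real.norm_eq_abs, abs_inv,
      abs_of_pos hs, ← Finset.mul_sum]
    exact inv_mul_cancel₀ hs.ne'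
  have := hεK ((s⁻¹ • a, s⁻¹ • b), j) ⟨hz, Set.mem_univ _⟩
  simp only [Pi.smul_apply, ← smul_add, norm_smul, Real.norm_eq_abs, abs_inv,
    abs_of_pos hs] at this
  calc ‖a + b j‖ = s * (s⁻¹ * ‖a + b j‖) := by field_simp
    _ ≤ s * (1 - ε) := by gcongr; linarith
    _ ≤ (1 - ε).toNNReal * s := by rw [mul_comm]; gcongr; exact Real.le_coe_toNNReal _

end Contraction

theorem AdaptedFun.dependsOn {m : ℕ} {Z : Type*} {F : ℕ → (ℕ → Fin m) → Z}
    (hF : AdaptedFun m F) (n : ℕ) : DependsOn (F n) (Set.Iio n) :=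
  fun x y h => hF n x y h

section Words

variable {m : ℕ}

lemma sum_words_succ {k : ℕ} {M : Type*} [AddCommMonoid M] (g : (Fin (k + 1) → Fin m) → M) :
    ∑ w, g w = ∑ u : Fin k → Fin m, ∑ j, g (Fin.snoc u j) := by
  rw [← (Fin.snocEquiv fun _ => Fin m).sum_comp g, Fintype.sum_prod_type, Finset.sum_comm]
  rfl

lemma cyl_eq_preimage (n : ℕ) (w : Fin n → Fin m) :
    cyl m n w = (fun x (i : Fin n) => x i) ⁻¹' {w} := by
  ext x
  simp [cyl, funext_iff]

lemma measurable_restrict_words (n : ℕ) :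
    Measurable fun (x : ℕ → Fin m) (i : Fin n) => x i :=
  measurable_pi_lambda _ fun _ => measurable_pi_apply _

variable [NeZero m]

def wordPoint {n : ℕ} (w : Fin n → Fin m) : ℕ → Fin m :=
  fun i => if h : i < n then w ⟨i, h⟩ else 0

lemma wordPoint_of_lt {n : ℕ} (w : Fin n → Fin m) {i : ℕ} (h : i < n) :
    wordPoint w i = w ⟨i, h⟩ :=
  dif_pos h

lemma wordPoint_snoc_of_lt {k : ℕ} (u : Fin k → Fin m) (j : Fin m) {i : ℕ} (hi : i < k) :
    wordPoint (Fin.snoc u j : Fin (k + 1) → Fin m) i = wordPoint u i := by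
  rw [wordPoint_of_lt _ (hi.trans k.lt_succ_self), wordPoint_of_lt _ hi]
  exact Fin.snoc_castSucc (α := fun _ => Fin m) (i := ⟨i, hi⟩) ..

lemma wordPoint_snoc_of_lt_succ {k : ℕ} (u : Fin k → Fin m) (j : Fin m) {i : ℕ}
    (hi : i < k + 1) :
    wordPoint (Fin.snoc u j : Fin (k + 1) → Fin m) i = Function.update (wordPoint u) k j i := by
  rcases (Nat.lt_succ_iff_lt_or_eq.1 hi) with hik | rfl
  · rw [wordPoint_snoc_of_lt u j hik, Function.update_of_ne hik.ne]
  · rw [wordPoint_of_lt _ hi, Function.update_self]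
    exact Fin.snoc_last (α := fun _ => Fin m) ..

lemma DependsOn.eq_wordPoint {Z : Type*} {g : (ℕ → Fin m) → Z} {n : ℕ}
    (hg : DependsOn g (Set.Iio n)) (x : ℕ → Fin m) :
    g x = g (wordPoint fun i : Fin n => x i) :=
  hg fun _ hi => (wordPoint_of_lt (fun i : Fin n => x i) hi).symm

lemma DependsOn.stronglyMeasurable {Z : Type*} [TopologicalSpace Z] {g : (ℕ → Fin m) → Z}
    {n : ℕ} (hg : DependsOn g (Set.Iio n)) : StronglyMeasurable g := by
  rw [show g = (fun w : Fin n → Fin m => g (wordPoint w)) ∘ fun x i => x i from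
    funext hg.eq_wordPoint]
  exact StronglyMeasurable.of_discrete.comp_measurable (measurable_restrict_words n)

lemma DependsOn.lintegral_eq_sum_cyl {g : (ℕ → Fin m) → ℝ≥0∞} {n : ℕ}
    (hg : DependsOn g (Set.Iio n)) (μ : Measure (ℕ → Fin m)) :
    ∫⁻ x, g x ∂μ = ∑ w : Fin n → Fin m, g (wordPoint w) * μ (cyl m n w) := by
  rw [lintegral_congr fun x => hg.eq_wordPoint x,
    ← lintegral_map (f := fun w : Fin n → Fin m => g (wordPoint w)) (measurable_of_countable _)
      (measurable_restrict_words n), lintegral_fintype]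
  simp only [Measure.map_apply (measurable_restrict_words n) (measurableSet_singleton _),
    cyl_eq_preimage]

end Words

section LevelNorm

variable {m : ℕ} [NeZero m] {E : Type*} [NormedAddCommGroup E]

def levelNorm (p : ℝ) (n : ℕ) (g : (ℕ → Fin m) → E) : ℝ≥0∞ :=
  (∑ w : Fin n → Fin m, ‖g (wordPoint w)‖ₑ ^ p) ^ (1 / p)

lemma levelNorm_one (n : ℕ) (g : (ℕ → Fin m) → E) :
    levelNorm 1 n g = ∑ w : Fin n → Fin m, ‖g (wordPoint w)‖ₑ := by
  simp [levelNorm]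

lemma levelNorm_zero_eq_levelNorm_one {p : ℝ} (hp : p ≠ 0) (g : (ℕ → Fin m) → E) :
    levelNorm p 0 g = levelNorm 1 0 g := by
  simp [levelNorm, hp]

lemma DependsOn.levelNorm_succ {g : (ℕ → Fin m) → E} {k : ℕ} (hg : DependsOn g (Set.Iio k))
    {p : ℝ} (hp : 0 < p) :
    levelNorm p (k + 1) g = (m : ℝ≥0∞) ^ (1 / p) * levelNorm p k g := by
  have hsnoc : ∀ u j, g (wordPoint (Fin.snoc u j : Fin (k + 1) → Fin m)) = g (wordPoint u) :=
    fun u j => hg fun _ hi => wordPoint_snoc_of_lt u j hi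
  simp only [levelNorm, sum_words_succ, hsnoc, Finset.sum_const, Finset.card_univ,
    Fintype.card_fin, nsmul_eq_mul, ← Finset.mul_sum]
  exact ENNReal.mul_rpow_of_nonneg _ _ (by positivity)

lemma DependsOn.eLpNorm_one_eq {g : (ℕ → Fin m) → E} {n : ℕ} (hg : DependsOn g (Set.Iio n))
    {P : Measure (ℕ → Fin m)} (hP : ∀ w : Fin n → Fin m, P (cyl m n w) = (m : ℝ≥0∞)⁻¹ ^ n) :
    eLpNorm g 1 P = ((m : ℝ≥0∞) ^ n)⁻¹ * levelNorm 1 n g := by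
  have hg' : DependsOn (fun x => ‖g x‖ₑ) (Set.Iio n) := fun _ _ h => congrArg _ (hg h)
  rw [eLpNorm_one_eq_lintegral_enorm, hg'.lintegral_eq_sum_cyl, levelNorm_one, Finset.mul_sum]
  simp only [hP, ENNReal.inv_pow, mul_comm]

lemma DependsOn.eLpNorm_le {g : (ℕ → Fin m) → E} {n : ℕ} (hg : DependsOn g (Set.Iio n))
    {ν : Measure (ℕ → Fin m)} {p : ℝ} (hp : 0 < p) {R : ℝ≥0∞}
    (hR : ∀ w : Fin n → Fin m, ν (cyl m n w) ^ (1 / p) ≤ R) :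
    eLpNorm g (ENNReal.ofReal p) ν ≤ R * levelNorm p n g := by
  have hg' : DependsOn (fun x => ‖g x‖ₑ ^ p) (Set.Iio n) :=
    fun _ _ h => congrArg (fun v => ‖v‖ₑ ^ p) (hg h)
  have hcyl : ∀ w, ν (cyl m n w) ≤ R ^ p := fun w => by
    simpa [← ENNReal.rpow_mul, hp.ne'] using ENNReal.rpow_le_rpow (hR w) hp.le
  rw [eLpNorm_eq_lintegral_rpow_enorm_toReal (by simpa using hp) ENNReal.ofReal_ne_top,
    ENNReal.toReal_ofReal hp.le, hg'.lintegral_eq_sum_cyl]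
  calc (∑ w : Fin n → Fin m, ‖g (wordPoint w)‖ₑ ^ p * ν (cyl m n w)) ^ (1 / p)
      ≤ (∑ w : Fin n → Fin m, ‖g (wordPoint w)‖ₑ ^ p * R ^ p) ^ (1 / p) := by
        gcongr with w
        exact hcyl w
    _ = R * levelNorm p n g := by
        rw [← Finset.sum_mul, ENNReal.mul_rpow_of_nonneg _ _ (by positivity), one_div,
          ENNReal.rpow_rpow_inv hp.ne', mul_comm, levelNorm, one_div]

end LevelNorm

section Tree

open Finset

theorem MemW.enorm_le_mul_sum {m l : ℕ} {W : Submodule ℝ (Fin m → EuclideanSpace ℝ (Fin l))}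
    {F : ℕ → (ℕ → Fin m) → EuclideanSpace ℝ (Fin l)} (hF : MemW m l W F) {θ : ℝ≥0}
    (hθ : ∀ a, ∀ b ∈ W, ∀ j, ‖a + b j‖ ≤ θ * ∑ j', ‖a + b j'‖) (n : ℕ) (x : ℕ → Fin m)
    (j : Fin m) :
    ‖F (n + 1) (Function.update x n j)‖ₑ ≤
      θ * ∑ j', ‖F (n + 1) (Function.update x n j')‖ₑ := by
  have hchild : ∀ j, F (n + 1) (Function.update x n j) = F n x + diffTuple m F n x j :=
    fun j => (add_sub_cancel _ _).symm
  simp only [hchild, ← ofReal_norm, ← ENNReal.ofReal_sum_of_nonneg fun _ _ => norm_nonneg _,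
    ← ENNReal.ofReal_coe_nnreal, ← ENNReal.ofReal_mul θ.coe_nonneg]
  exact ENNReal.ofReal_le_ofReal (hθ _ _ (hF n x) j)

variable {m : ℕ} {E : Type*} [NormedAddCommGroup E] {F : ℕ → (ℕ → Fin m) → E}

theorem IsMartingaleFun.enorm_le_sum [NormedSpace ℝ E] (hF : IsMartingaleFun m F) (n : ℕ)
    (x : ℕ → Fin m) :
    (m : ℝ≥0∞) * ‖F n x‖ₑ ≤ ∑ j, ‖F (n + 1) (Function.update x n j)‖ₑ := by
  rw [← Real.enorm_natCast, ← enorm_smul, hF.2 n x]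
  exact enorm_sum_le _ _

variable [NeZero m]

theorem exists_levelNorm_succ_le (hF : AdaptedFun m F)
    (hmart : ∀ n x, (m : ℝ≥0∞) * ‖F n x‖ₑ ≤ ∑ j, ‖F (n + 1) (Function.update x n j)‖ₑ)
    {θ : ℝ≥0∞}
    (hθ : ∀ n x j, ‖F (n + 1) (Function.update x n j)‖ₑ ≤
      θ * ∑ j', ‖F (n + 1) (Function.update x n j')‖ₑ)
    {p : ℝ} (hp : 1 ≤ p) (k : ℕ) :
    ∃ T, levelNorm 1 (k + 1) (F (k + 1)) = m * levelNorm 1 k (F k) + T ∧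
      levelNorm p (k + 1) (F (k + 1)) ≤ θ ^ (1 - 1 / p) * (m * levelNorm p k (F k) + T) := by
  have hchild : ∀ u j, F (k + 1) (wordPoint (Fin.snoc u j : Fin (k + 1) → Fin m)) =
      F (k + 1) (Function.update (wordPoint u) k j) :=
    fun u j => hF.dependsOn (k + 1) fun _ hi => wordPoint_snoc_of_lt_succ u j hi
  set X : (Fin k → Fin m) → ℝ≥0∞ := fun u => ‖F k (wordPoint u)‖ₑ
  set Y : (Fin k → Fin m) → ℝ≥0∞ := fun u => ∑ j, ‖F (k + 1) (wordPoint (Fin.snoc u j))‖ₑ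
  have hY : ∀ u, Y u = m * X u + (Y u - m * X u) := fun u =>
    (add_tsub_cancel_of_le (by simpa only [Y, hchild] using hmart k (wordPoint u))).symm
  refine ⟨∑ u, (Y u - m * X u), ?_, ?_⟩
  · rw [levelNorm_one, levelNorm_one, sum_words_succ, mul_sum, ← sum_add_distrib]
    exact sum_congr rfl fun u _ => hY u
  calc levelNorm p (k + 1) (F (k + 1))
      = (∑ u, ∑ j, ‖F (k + 1) (wordPoint (Fin.snoc u j))‖ₑ ^ p) ^ (1 / p) := by
        rw [levelNorm, sum_words_succ]
    _ ≤ (∑ u, (θ ^ (1 - 1 / p) * Y u) ^ p) ^ (1 / p) := by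
        gcongr with u
        refine ENNReal.sum_rpow_le_of_le_mul_sum (fun j _ => ?_) hp
        simpa only [hchild] using hθ k (wordPoint u) j
    _ = θ ^ (1 - 1 / p) * (∑ u, (m * X u + (Y u - m * X u)) ^ p) ^ (1 / p) := by
        rw [ENNReal.rpow_sum_const_mul_rpow _ _ (by linarith)]
        simp only [← hY]
    _ ≤ θ ^ (1 - 1 / p) *
          ((∑ u, (m * X u) ^ p) ^ (1 / p) + (∑ u, (Y u - m * X u) ^ p) ^ (1 / p)) := by
        gcongr
        exact ENNReal.Lp_add_le _ _ _ hp
    _ ≤ θ ^ (1 - 1 / p) * (m * levelNorm p k (F k) + ∑ u, (Y u - m * X u)) := by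
        rw [ENNReal.rpow_sum_const_mul_rpow _ _ (by linarith)]
        gcongr _ * (_ + ?_)
        exact ENNReal.rpow_sum_rpow_le_sum hp

lemma inv_pow_succ_mul_self (k : ℕ) : ((m : ℝ≥0∞) ^ (k + 1))⁻¹ * m = ((m : ℝ≥0∞) ^ k)⁻¹ := by
  rw [pow_succ, ENNReal.mul_inv (by simp) (by simp), mul_assoc,
    ENNReal.inv_mul_cancel (by simp [NeZero.ne m]) (by simp), mul_one]

theorem sum_range_levelNorm_le (hF : AdaptedFun m F)
    (hmart : ∀ n x, (m : ℝ≥0∞) * ‖F n x‖ₑ ≤ ∑ j, ‖F (n + 1) (Function.update x n j)‖ₑ)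
    {θ : ℝ≥0∞} {p : ℝ} (hp : 1 ≤ p) (hσ : θ ^ (1 - 1 / p) < 1)
    (hθ : ∀ n x j, ‖F (n + 1) (Function.update x n j)‖ₑ ≤
      θ * ∑ j', ‖F (n + 1) (Function.update x n j')‖ₑ)
    {P : Measure (ℕ → Fin m)}
    (hP : ∀ (n : ℕ) (w : Fin n → Fin m), P (cyl m n w) = (m : ℝ≥0∞)⁻¹ ^ n) (N : ℕ) :
    ∑ k ∈ range N, ((m : ℝ≥0∞) ^ k)⁻¹ * levelNorm p k (F k) ≤
      (1 - θ ^ (1 - 1 / p))⁻¹ * (2 * ⨆ n, eLpNorm (F n) 1 P) := by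
  choose T hT1 hT2 using exists_levelNorm_succ_le hF hmart hθ hp
  have hV : ∀ k, eLpNorm (F k) 1 P = ((m : ℝ≥0∞) ^ k)⁻¹ * levelNorm 1 k (F k) :=
    fun k => (hF.dependsOn k).eLpNorm_one_eq (hP k)
  refine ENNReal.sum_range_le_of_le_mul_add (Δ := fun k => ((m : ℝ≥0∞) ^ (k + 1))⁻¹ * T k) hσ
    ?_ (le_iSup _) (fun k => ?_) (fun k => ?_) N
  · rw [hV, levelNorm_zero_eq_levelNorm_one (by linarith)]
  · rw [hV, hV, hT1, mul_add, ← mul_assoc, inv_pow_succ_mul_self]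
  · calc ((m : ℝ≥0∞) ^ (k + 1))⁻¹ * levelNorm p (k + 1) (F (k + 1))
        ≤ ((m : ℝ≥0∞) ^ (k + 1))⁻¹ * (θ ^ (1 - 1 / p) * (m * levelNorm p k (F k) + T k)) := by
          gcongr
          exact hT2 k
      _ = θ ^ (1 - 1 / p) * (((m : ℝ≥0∞) ^ (k + 1))⁻¹ * m * levelNorm p k (F k) +
            ((m : ℝ≥0∞) ^ (k + 1))⁻¹ * T k) := by ring
      _ = _ := by rw [inv_pow_succ_mul_self]

end Tree

section Trace

open Finset

variable {m : ℕ} {E : Type*} [NormedAddCommGroup E] {F : ℕ → (ℕ → Fin m) → E}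

lemma rieszSum_eq_sum_range [NormedSpace ℝ E] (α : ℝ) (N : ℕ) :
    rieszSum m α F N =
      ∑ k ∈ range N, fun x => (m : ℝ) ^ (-(α * (k + 1 : ℕ))) • (F (k + 1) x - F k x) := by
  funext x
  have h := sum_Ico_add' (fun n : ℕ => (m : ℝ) ^ (-(α * n)) • (F n x - F (n - 1) x)) 0 N 1
  rw [zero_add, Ico_add_one_right_eq_Icc, ← range_eq_Ico] at h
  rw [rieszSum, Finset.sum_apply, ← h]
  simp

variable [NeZero m]

lemma ofReal_rpow_neg_mul_ofReal_rpow (α : ℝ) (n : ℕ) :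
    ENNReal.ofReal ((m : ℝ) ^ (-(α * n))) * ENNReal.ofReal ((m : ℝ) ^ ((α - 1) * n)) =
      ((m : ℝ≥0∞) ^ n)⁻¹ := by
  have hm : (0 : ℝ) < m := Nat.cast_pos.2 (Nat.pos_of_ne_zero (NeZero.ne m))
  rw [← ENNReal.ofReal_mul (by positivity), ← Real.rpow_add hm,
    show -(α * n) + (α - 1) * n = -(n : ℝ) by ring, Real.rpow_neg hm.le, Real.rpow_natCast,
    ENNReal.ofReal_inv_of_pos (by positivity), ENNReal.ofReal_pow hm.le, ENNReal.ofReal_natCast]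

theorem AdaptedFun.eLpNorm_succ_sub_le (hF : AdaptedFun m F) {ν : Measure (ℕ → Fin m)} {p : ℝ}
    (hp : 1 ≤ p) {k : ℕ} {R : ℝ≥0∞}
    (hR : ∀ w : Fin (k + 1) → Fin m, ν (cyl m (k + 1) w) ^ (1 / p) ≤ R) :
    eLpNorm (F (k + 1) - F k) (ENNReal.ofReal p) ν ≤
      R * (levelNorm p (k + 1) (F (k + 1)) + m * levelNorm p k (F k)) := by
  have hp0 : 0 < p := by linarith
  have hFk := (hF.dependsOn k).mono (Set.Iio_subset_Iio k.le_succ)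
  have hm : (m : ℝ≥0∞) ^ (1 / p) ≤ m := by
    simpa using ENNReal.rpow_le_rpow_of_exponent_le (Nat.one_le_cast.2 NeZero.one_le)
      (by rw [div_le_one hp0]; exact hp : 1 / p ≤ 1)
  calc eLpNorm (F (k + 1) - F k) (ENNReal.ofReal p) ν
      ≤ eLpNorm (F (k + 1)) (ENNReal.ofReal p) ν + eLpNorm (F k) (ENNReal.ofReal p) ν :=
        eLpNorm_sub_le (hF.dependsOn _).stronglyMeasurable.aestronglyMeasurable
          hFk.stronglyMeasurable.aestronglyMeasurable (by simpa using hp)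
    _ ≤ R * levelNorm p (k + 1) (F (k + 1)) + R * levelNorm p (k + 1) (F k) :=
        add_le_add ((hF.dependsOn _).eLpNorm_le hp0 hR) (hFk.eLpNorm_le hp0 hR)
    _ ≤ R * (levelNorm p (k + 1) (F (k + 1)) + m * levelNorm p k (F k)) := by
        rw [(hF.dependsOn k).levelNorm_succ hp0, mul_add]
        gcongr

variable [NormedSpace ℝ E]

theorem eLpNorm_rieszTerm_le (hF : AdaptedFun m F) {ν : Measure (ℕ → Fin m)} {p : ℝ}
    (hp : 1 ≤ p) {α : ℝ} {Cν : ℝ≥0}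
    (hfrost : ∀ (n : ℕ) (w : Fin n → Fin m),
      ν (cyl m n w) ^ (1 / p) ≤ Cν * ENNReal.ofReal ((m : ℝ) ^ ((α - 1) * n))) (k : ℕ) :
    eLpNorm (fun x => (m : ℝ) ^ (-(α * (k + 1 : ℕ))) • (F (k + 1) x - F k x))
        (ENNReal.ofReal p) ν ≤
      Cν * (((m : ℝ≥0∞) ^ (k + 1))⁻¹ * levelNorm p (k + 1) (F (k + 1)) +
        ((m : ℝ≥0∞) ^ k)⁻¹ * levelNorm p k (F k)) := by
  set c := (m : ℝ) ^ (-(α * (k + 1 : ℕ)))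
  calc eLpNorm (fun x => c • (F (k + 1) x - F k x)) (ENNReal.ofReal p) ν
      = ENNReal.ofReal c * eLpNorm (F (k + 1) - F k) (ENNReal.ofReal p) ν := by
        rw [← Real.enorm_eq_ofReal (by positivity : 0 ≤ c), ← eLpNorm_const_smul]
        rfl
    _ ≤ ENNReal.ofReal c * (Cν * ENNReal.ofReal ((m : ℝ) ^ ((α - 1) * (k + 1 : ℕ))) *
          (levelNorm p (k + 1) (F (k + 1)) + m * levelNorm p k (F k))) := by
        gcongr
        exact hF.eLpNorm_succ_sub_le hp (hfrost _)
    _ = Cν * (ENNReal.ofReal c * ENNReal.ofReal ((m : ℝ) ^ ((α - 1) * (k + 1 : ℕ)))) *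
          (levelNorm p (k + 1) (F (k + 1)) + m * levelNorm p k (F k)) := by ring
    _ = _ := by
        rw [ofReal_rpow_neg_mul_ofReal_rpow, mul_assoc, mul_add, ← mul_assoc _ (m : ℝ≥0∞),
          inv_pow_succ_mul_self]

theorem eLpNorm_rieszSum_le (hF : AdaptedFun m F) {ν : Measure (ℕ → Fin m)} {p : ℝ}
    (hp : 1 ≤ p) {α : ℝ} {Cν : ℝ≥0}
    (hfrost : ∀ (n : ℕ) (w : Fin n → Fin m),
      ν (cyl m n w) ^ (1 / p) ≤ Cν * ENNReal.ofReal ((m : ℝ) ^ ((α - 1) * n))) (N : ℕ) :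
    eLpNorm (rieszSum m α F N) (ENNReal.ofReal p) ν ≤
      2 * Cν * ∑ k ∈ range (N + 1), ((m : ℝ≥0∞) ^ k)⁻¹ * levelNorm p k (F k) := by
  set Q : ℕ → ℝ≥0∞ := fun k => ((m : ℝ≥0∞) ^ k)⁻¹ * levelNorm p k (F k)
  rw [rieszSum_eq_sum_range]
  calc _ ≤ ∑ k ∈ range N, eLpNorm
          (fun x => (m : ℝ) ^ (-(α * (k + 1 : ℕ))) • (F (k + 1) x - F k x)) (ENNReal.ofReal p) ν :=
        eLpNorm_sum_le (fun k _ => (((hF.dependsOn _).stronglyMeasurable.sub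
          (hF.dependsOn k).stronglyMeasurable).const_smul _).aestronglyMeasurable)
          (by simpa using hp)
    _ ≤ ∑ k ∈ range N, Cν * (Q (k + 1) + Q k) :=
        sum_le_sum fun k _ => eLpNorm_rieszTerm_le hF hp hfrost k
    _ ≤ Cν * (∑ k ∈ range (N + 1), Q k + ∑ k ∈ range (N + 1), Q k) := by
        rw [← mul_sum, sum_add_distrib]
        gcongr
        · rw [sum_range_succ' Q]
          exact le_self_add
        · exact N.le_succ
    _ = 2 * Cν * ∑ k ∈ range (N + 1), Q k := by ring

end Trace

end MartingaleModel

theorem trace_theorem_p_gt_one_general (m l : ℕ) (hm : 3 ≤ m)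
    (P : Measure (ℕ → Fin m))
    (hPcyl : ∀ (n : ℕ) (w : Fin n → Fin m), P (cyl m n w) = ((m : ℝ≥0∞))⁻¹ ^ n)
    (W : Submodule ℝ (Fin m → EuclideanSpace ℝ (Fin l)))
    (hWV : ∀ b ∈ W, ∑ j : Fin m, b j = 0)
    (hW : SecondStructural m l W)
    (p α : ℝ) (hp : 1 < p)
    (ν : Measure (ℕ → Fin m)) (Cν : ℝ≥0)
    (hfrost : ∀ (n : ℕ) (w : Fin n → Fin m),
      (ν (cyl m n w)) ^ (1 / p) ≤ (Cν : ℝ≥0∞) * ENNReal.ofReal ((m : ℝ) ^ ((α - 1) * n))) :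
    ∃ C : ℝ≥0, ∀ F : ℕ → (ℕ → Fin m) → EuclideanSpace ℝ (Fin l),
      IsMartingaleFun m F → (⨆ n, eLpNorm (F n) 1 P) < ⊤ → MemW m l W F →
      ∀ N, 1 ≤ N →
        eLpNorm (rieszSum m α F N) (ENNReal.ofReal p) ν ≤
          C * ⨆ n, eLpNorm (F n) 1 P := by
  have : NeZero m := ⟨by omega⟩
  obtain ⟨θ, hθ1, hθ⟩ := exists_norm_le_mul_sum_of_norm_lt_sum hWV
    fun a b hb j => hW.norm_lt_sum (by omega) hWV hb
  have hσ : (θ : ℝ≥0∞) ^ (1 - 1 / p) < 1 :=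
    ENNReal.rpow_lt_one (ENNReal.coe_lt_one_iff.2 hθ1)
      (by rw [sub_pos, div_lt_one (by linarith)]; exact hp)
  refine ⟨(2 * Cν * ((1 - (θ : ℝ≥0∞) ^ (1 - 1 / p))⁻¹ * 2)).toNNReal,
    fun F hF _ hFW N _ => ?_⟩
  rw [ENNReal.coe_toNNReal (ENNReal.mul_ne_top (ENNReal.mul_ne_top (by simp) (by simp))
    (ENNReal.mul_ne_top (ENNReal.inv_ne_top.2 (tsub_pos_of_lt hσ).ne') (by simp)))]
  calc eLpNorm (rieszSum m α F N) (ENNReal.ofReal p) ν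
      ≤ 2 * Cν * ∑ k ∈ Finset.range (N + 1), ((m : ℝ≥0∞) ^ k)⁻¹ * levelNorm p k (F k) :=
        eLpNorm_rieszSum_le hF.1 hp.le hfrost N
    _ ≤ 2 * Cν * ((1 - (θ : ℝ≥0∞) ^ (1 - 1 / p))⁻¹ * (2 * ⨆ n, eLpNorm (F n) 1 P)) := by
        gcongr
        exact sum_range_levelNorm_le hF.1 hF.enorm_le_sum hp.le hσ
          (hFW.enorm_le_mul_sum hθ) hPcyl _
    _ = _ := by ring

/-- **Trace theorem for `p > 1`.** Let `p ∈ (1,∞)`, `α > 0`, let `W` satisfy the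
second structural condition, and let `ν` be a finite positive Borel measure on `𝕋`
with `ν(ω_w)^{1/p} ≤ C_ν·m^{(α-1)n}` for all cylinders (the `(α,p)`-Frostman
condition). Then there is `C` such that every `F ∈ 𝔚` satisfies
`‖∑_{n=1}^N m^{-αn} f_n‖_{L_p(ν)} ≤ C·‖F‖_{L_1}` for every `N ≥ 1`. -/
theorem trace_theorem_p_gt_one (m l : ℕ) (hm : 3 ≤ m) (hl : 1 ≤ l)
    (P : Measure (ℕ → Fin m)) (hP : IsProbabilityMeasure P)
    (hPcyl : ∀ (n : ℕ) (w : Fin n → Fin m), P (cyl m n w) = ((m : ℝ≥0∞))⁻¹ ^ n)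
    (W : Submodule ℝ (Fin m → EuclideanSpace ℝ (Fin l)))
    (hWV : ∀ b ∈ W, ∑ j : Fin m, b j = 0)
    (hW : SecondStructural m l W)
    (p α : ℝ) (hp : 1 < p) (hα : 0 < α)
    (ν : Measure (ℕ → Fin m)) (hν : IsFiniteMeasure ν) (Cν : ℝ≥0)
    (hfrost : ∀ (n : ℕ) (w : Fin n → Fin m),
      (ν (cyl m n w)) ^ (1 / p) ≤ (Cν : ℝ≥0∞) * ENNReal.ofReal ((m : ℝ) ^ ((α - 1) * n))) :
    ∃ C : ℝ≥0, ∀ F : ℕ → (ℕ → Fin m) → EuclideanSpace ℝ (Fin l),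
      IsMartingaleFun m F → (⨆ n, eLpNorm (F n) 1 P) < ⊤ → MemW m l W F →
      ∀ N, 1 ≤ N →
        eLpNorm (rieszSum m α F N) (ENNReal.ofReal p) ν ≤
          C * ⨆ n, eLpNorm (F n) 1 P :=
  trace_theorem_p_gt_one_general m l hm P hPcyl W hWV hW p α hp ν Cν hfrost
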